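/- Let G be a finite unit disk graph (proximity model in ℝ², threshold 2). Then the chromatic number of G is at most 6·ω(G) − 5, where ω(G) is the clique number; equivalently χ(G) ≤ Δ(G)+1 ≤ 6(ω(G)−1)+1. -/

import Mathlib

/-- Unit disk graph in the proximity model: vertices are mapped to points in the
plane and two distinct vertices are adjacent iff their points are at distance ≤ 2. -/
def unitDiskGraph {V : Type*} (P : V → EuclideanSpace ℝ (Fin 2)) : SimpleGraph V where
  Adj u v := u ≠ v ∧ dist (P u) (P v) ≤ 2
  symm := by
    constructor
    intro u v h
    exact ⟨h.1.symm, by rw [dist_comm]; exact h.2⟩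
  loopless := by
    constructor
    intro v h
    exact h.1 rfl

/-!
Around a vertex `v`, cut the plane into six sectors of angle `π/3` centred at `v`. Two points at
distance `≤ 2` from `v` whose directions differ by at most `π/3` are at distance `≤ 2` from each
other (law of cosines), so each sector's neighbours of `v`, together with `v`, form a clique.
Hence `deg v ≤ 6(ω - 1)`, and greedy colouring uses at most `Δ + 1 ≤ 6ω - 5` colours.
-/

open Finset InnerProductGeometry Real

namespace SimpleGraph

variable {V : Type*} (G : SimpleGraph V)

theorem colorable_of_forall_degree_le [Fintype V] [DecidableRel G.Adj] {d : ℕ}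
    (h : ∀ v, G.degree v ≤ d) : G.Colorable (d + 1) := by
  classical
  suffices ∀ s : Finset V, ∃ C : V → Fin (d + 1), ∀ u ∈ s, ∀ w ∈ s, G.Adj u w → C u ≠ C w by
    obtain ⟨C, hC⟩ := this univ
    exact ⟨Coloring.mk C fun {u w} huw => hC u (mem_univ u) w (mem_univ w) huw⟩
  intro s
  induction s using Finset.induction_on with
  | empty => exact ⟨fun _ => 0, by simp⟩
  | insert a s ha ih =>
    obtain ⟨C, hC⟩ := ih
    have hfree : #((G.neighborFinset a).image C) < #(univ : Finset (Fin (d + 1))) := by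
      rw [card_univ, Fintype.card_fin, Nat.lt_succ_iff]
      exact card_image_le.trans ((card_neighborFinset_eq_degree G a).trans_le (h a))
    obtain ⟨c, -, hc⟩ := exists_mem_notMem_of_card_lt_card hfree
    have hnew : ∀ u ∈ s, G.Adj a u → Function.update C a c u ≠ c := by
      intro u hu hau
      rw [Function.update_of_ne (ne_of_mem_of_not_mem hu ha)]
      exact fun hcu => hc (mem_image.2 ⟨u, (mem_neighborFinset G a u).2 hau, hcu⟩)
    refine ⟨Function.update C a c, ?_⟩
    intro u hu w hw huw
    rcases mem_insert.1 hu with rfl | hus <;> rcases mem_insert.1 hw with rfl | hws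
    · exact absurd huw (G.loopless.irrefl _)
    · simpa using (hnew w hws huw).symm
    · simpa using hnew u hus huw.symm
    · rw [Function.update_of_ne (ne_of_mem_of_not_mem hus ha),
        Function.update_of_ne (ne_of_mem_of_not_mem hws ha)]
      exact hC u hus w hws huw

theorem degree_le_card_mul_cliqueNum_sub_one [Fintype V] [DecidableRel G.Adj] {ι : Type*}
    [DecidableEq ι] (v : V) (f : V → ι) (s : Finset ι) (hf : ∀ u, G.Adj v u → f u ∈ s)
    (hclique : ∀ u w, G.Adj v u → G.Adj v w → u ≠ w → f u = f w → G.Adj u w) :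
    G.degree v ≤ #s * (G.cliqueNum - 1) := by
  classical
  rw [← card_neighborFinset_eq_degree,
    card_eq_sum_card_fiberwise fun u hu => hf u ((mem_neighborFinset G v u).1 hu)]
  refine sum_le_card_nsmul _ _ _ fun i _ => ?_
  set t := (G.neighborFinset v).filter (f · = i)
  have hadj : ∀ u ∈ t, G.Adj v u := fun u hu => (G.mem_neighborFinset v u).1 (mem_filter.1 hu).1
  have hvt : v ∉ t := fun hv => G.loopless.irrefl v (hadj v hv)
  have hcl : G.IsClique (insert v t : Finset V) := by
    rw [coe_insert]
    refine IsClique.insert (fun u hu w hw huw => ?_) fun u hu _ => hadj u hu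
    exact hclique u w (hadj u hu) (hadj w hw) huw
      (((mem_filter.1 hu).2).trans (mem_filter.1 hw).2.symm)
  have := hcl.card_le_cliqueNum
  rw [card_insert_of_notMem hvt] at this
  omega

end SimpleGraph

theorem norm_sub_le_of_angle_le_pi_div_three {E : Type*} [NormedAddCommGroup E]
    [InnerProductSpace ℝ E] {x y : E} {r : ℝ} (hx : ‖x‖ ≤ r) (hy : ‖y‖ ≤ r)
    (hxy : angle x y ≤ π / 3) : ‖x - y‖ ≤ r := by
  have hcos : 1 / 2 ≤ cos (angle x y) := by
    rw [← cos_pi_div_three]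
    exact cos_le_cos_of_nonneg_of_le_pi (angle_nonneg x y) (by linarith [pi_pos]) hxy
  have hsq : ‖x - y‖ * ‖x - y‖ ≤ r * r := by
    rw [norm_sub_sq_eq_norm_sq_add_norm_sq_sub_two_mul_norm_mul_norm_mul_cos_angle]
    nlinarith [norm_nonneg x, norm_nonneg y, mul_nonneg (norm_nonneg x) (norm_nonneg y),
      mul_le_mul_of_nonneg_left hcos (mul_nonneg (norm_nonneg x) (norm_nonneg y))]
  exact (mul_self_le_mul_self_iff (norm_nonneg _) ((norm_nonneg x).trans hx)).2 hsq

namespace Complex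

theorem arg_div_eq_sub_arg_iff {x y : ℂ} (hx : x ≠ 0) (hy : y ≠ 0) :
    (x / y).arg = x.arg - y.arg ↔ x.arg - y.arg ∈ Set.Ioc (-π) π := by
  rw [← arg_coe_angle_toReal_eq_arg, arg_div_coe_angle hx hy, ← Real.Angle.coe_sub,
    Real.Angle.toReal_coe_eq_self_iff_mem_Ioc]

/-- `arg z` lies in `((k - 1)π/3, kπ/3]` for `k = sixthSector z`; as `arg z ∈ (-π, π]`, only the
six values `k = -2, …, 3` occur. -/
noncomputable def sixthSector (z : ℂ) : ℤ := ⌈z.arg / (π / 3)⌉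

theorem sixthSector_mem_Icc (z : ℂ) : sixthSector z ∈ Icc (-2 : ℤ) 3 := by
  have hπ : 0 < π / 3 := by positivity
  rw [mem_Icc, sixthSector, Int.ceil_le, ← Int.sub_one_lt_iff, Int.lt_ceil,
    lt_div_iff₀ hπ, div_le_iff₀ hπ]
  push_cast
  constructor <;> linarith [neg_pi_lt_arg z, arg_le_pi z]

theorem abs_arg_sub_arg_lt_of_sixthSector_eq {z w : ℂ} (h : sixthSector z = sixthSector w) :
    |z.arg - w.arg| < π / 3 := by
  have hπ : 0 < π / 3 := by positivity
  have hz := Int.ceil_lt_add_one (z.arg / (π / 3))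
  have hw := Int.ceil_lt_add_one (w.arg / (π / 3))
  have hz' := Int.le_ceil (z.arg / (π / 3))
  have hw' := Int.le_ceil (w.arg / (π / 3))
  have hdiff : |z.arg / (π / 3) - w.arg / (π / 3)| < 1 := by
    rw [sixthSector, sixthSector] at h
    rw [h] at hz hz'
    rw [abs_lt]
    constructor <;> linarith
  rwa [← sub_div, abs_div, abs_of_pos hπ, div_lt_one hπ] at hdiff

theorem norm_sub_le_of_sixthSector_eq {z w : ℂ} {r : ℝ} (hz : ‖z‖ ≤ r) (hw : ‖w‖ ≤ r)
    (h : sixthSector z = sixthSector w) : ‖z - w‖ ≤ r := by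
  rcases eq_or_ne z 0 with rfl | hz0
  · simpa using hw
  rcases eq_or_ne w 0 with rfl | hw0
  · simpa using hz
  have hlt := abs_arg_sub_arg_lt_of_sixthSector_eq h
  have hmem : z.arg - w.arg ∈ Set.Ioc (-π) π := by
    rw [abs_lt] at hlt
    constructor <;> linarith [pi_pos]
  refine norm_sub_le_of_angle_le_pi_div_three hz hw ?_
  rw [angle_eq_abs_arg hz0 hw0, (arg_div_eq_sub_arg_iff hz0 hw0).2 hmem]
  exact hlt.le

end Complex

/-- For a finite unit disk graph, `χ(G) ≤ 6·ω(G) − 5`, where `ω(G)` is the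
clique number.  (This gives competitive ratio 6 for on-line first-fit coloring.) -/
theorem unitDiskGraph_chromaticNumber_le {V : Type*} [Fintype V] [Nonempty V]
    (P : V → EuclideanSpace ℝ (Fin 2)) :
    (unitDiskGraph P).chromaticNumber ≤
      (6 * (unitDiskGraph P).cliqueNum - 5 : ℕ) := by
  classical
  set G := unitDiskGraph P
  let e := Complex.orthonormalBasisOneI.repr.symm
  have hdist (x y : EuclideanSpace ℝ (Fin 2)) : dist x y = ‖e x - e y‖ := by
    rw [← e.dist_map, dist_eq_norm]
  have hdeg (v : V) : G.degree v ≤ 6 * (G.cliqueNum - 1) := by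
    refine G.degree_le_card_mul_cliqueNum_sub_one v
      (fun u => Complex.sixthSector (e (P u) - e (P v))) (Icc (-2) 3)
      (fun u _ => Complex.sixthSector_mem_Icc _) fun u w hu hw huw hsector => ⟨huw, ?_⟩
    have hnear {x : V} (hx : G.Adj v x) : ‖e (P x) - e (P v)‖ ≤ 2 := by
      rw [← hdist, dist_comm]
      exact hx.2
    rw [hdist, ← sub_sub_sub_cancel_right _ _ (e (P v))]
    exact Complex.norm_sub_le_of_sixthSector_eq (hnear hu) (hnear hw) hsector
  have hω : 1 ≤ G.cliqueNum := by
    obtain ⟨v⟩ := ‹Nonempty V›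
    simpa using SimpleGraph.IsClique.card_le_cliqueNum (G := G) (t := {v}) (tc := by simp)
  calc G.chromaticNumber ≤ (6 * (G.cliqueNum - 1) + 1 : ℕ) :=
        (G.colorable_of_forall_degree_le hdeg).chromaticNumber_le
    _ = (6 * G.cliqueNum - 5 : ℕ) := by congr 1; omega
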